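/- Let A → B be a local homomorphism of seminormed commutative local rings with maximal ideals m_A, m_B, and equip the residue fields k_A = A/m_A and k_B = B/m_B with the quotient seminorms. If every element of m_B has seminorm 0 in B, then the natural surjection Ω_{B/A} → Ω_{k_B/k_A} is an isometry for the Kähler seminorms on both sides. -/

import Mathlib

open scoped NNReal TensorProduct

/-- A (nonarchimedean) seminorm on an additive group. -/
def IsGroupSeminorm {M : Type*} [AddCommGroup M] (f : M → ℝ≥0) : Prop :=
  f 0 = 0 ∧ ∀ x y : M, f (x - y) ≤ max (f x) (f y)

/-- A seminorm on a commutative ring. -/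
def IsRingSeminorm {A : Type*} [CommRing A] (f : A → ℝ≥0) : Prop :=
  IsGroupSeminorm f ∧ f 1 = 1 ∧ ∀ x y : A, f (x * y) ≤ f x * f y

/-- The Kähler seminorm on `Ω[B⁄A]` induced by a seminorm `vB` on `B`. -/
noncomputable def kahlerSeminorm (A B : Type*) [CommRing A] [CommRing B] [Algebra A B]
    (vB : B → ℝ≥0) (x : Ω[B⁄A]) : ℝ≥0 :=
  sInf { r | ∃ (n : ℕ) (c b : Fin n → B),
    x = ∑ i, c i • KaehlerDifferential.D A B (b i) ∧
    r = Finset.univ.sup fun i => vB (c i) * vB (b i) }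

/-- The quotient seminorm induced by a (surjective) map `f : M → N` from a seminorm on `M`. -/
noncomputable def quotientSeminorm {M N : Type*} (f : M → N) (v : M → ℝ≥0) (y : N) : ℝ≥0 :=
  sInf { r | ∃ x : M, f x = y ∧ r = v x }

/-!
Because `vB` is nonarchimedean and vanishes on `m_B`, it is constant on the fibres of `πB`, so
the quotient seminorm satisfies `‖πB b‖ = vB b`. Hence `Φ` sends a representation
`x = ∑ cᵢ • d bᵢ` to a representation of `Φ x` of the same value, and conversely every
representation of `Φ x` lifts termwise to a representation of some `y` with `Φ y = Φ x` of the
same value. A derivation `L → Ω[B⁄A] ⧸ (m_B • Ω + B • d m_B)` descended from `d` shows that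
`x - y` lies in `m_B • Ω + B • d m_B`, and every element of that submodule is a sum of terms
`c • d b` of value `0`; appending them to the representation of `y` represents `x`.
-/

open KaehlerDifferential

section Seminorm

variable {M : Type*} [AddCommGroup M] {v : M → ℝ≥0}

theorem IsGroupSeminorm.map_neg_le (hv : IsGroupSeminorm v) (x : M) : v (-x) ≤ v x := by
  simpa [hv.1] using hv.2 0 x

theorem IsGroupSeminorm.map_sub_comm (hv : IsGroupSeminorm v) (x y : M) :
    v (x - y) = v (y - x) :=
  le_antisymm (by simpa using hv.map_neg_le (y - x)) (by simpa using hv.map_neg_le (x - y))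

theorem IsGroupSeminorm.map_le_of_map_sub_eq_zero (hv : IsGroupSeminorm v) {x y : M}
    (h : v (x - y) = 0) : v x ≤ v y := by
  simpa [← hv.map_sub_comm, h] using hv.2 y (y - x)

theorem IsGroupSeminorm.map_eq_of_map_sub_eq_zero (hv : IsGroupSeminorm v) {x y : M}
    (h : v (x - y) = 0) : v x = v y :=
  le_antisymm (hv.map_le_of_map_sub_eq_zero h)
    (hv.map_le_of_map_sub_eq_zero (by rwa [hv.map_sub_comm]))

end Seminorm

theorem quotientSeminorm_apply_of_eq_on_fibers {M N : Type*} {f : M → N} {v : M → ℝ≥0}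
    (hv : ∀ x y, f x = f y → v x = v y) (x : M) : quotientSeminorm f v (f x) = v x :=
  le_antisymm (csInf_le (OrderBot.bddBelow _) ⟨x, rfl, rfl⟩) <|
    le_csInf ⟨_, x, rfl, rfl⟩ fun _ ⟨y, hy, hr⟩ => hr ▸ (hv y x hy).ge

theorem Submodule.Quotient.smul_eq_smul_of_sub_mem {R M : Type*} [CommRing R] [AddCommGroup M]
    [Module R M] {I : Ideal R} {N : Submodule R M} (hN : I • ⊤ ≤ N) {c c' : R} (h : c - c' ∈ I)
    (q : M ⧸ N) : c • q = c' • q := by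
  obtain ⟨m, rfl⟩ := N.mkQ_surjective q
  rw [← map_smul, ← map_smul, Submodule.mkQ_apply, Submodule.mkQ_apply,
    Submodule.Quotient.eq, ← sub_smul]
  exact hN (Submodule.smul_mem_smul h trivial)

section Representations

variable {A B : Type*} [CommRing A] [CommRing B] [Algebra A B] {vB : B → ℝ≥0}

theorem KaehlerDifferential.exists_eq_sum_smul_D (x : Ω[B⁄A]) :
    ∃ (n : ℕ) (c b : Fin n → B), x = ∑ i, c i • D A B (b i) := by
  have hx : x ∈ Submodule.span B (Set.range (D A B)) := by
    simp [span_range_derivation]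
  obtain ⟨n, c, g, hg⟩ := Submodule.mem_span_set'.mp hx
  choose b hb using fun i => (g i).2
  exact ⟨n, c, b, by simp only [hb, hg]⟩

theorem kahlerSeminorm_le_of_eq_sum {x : Ω[B⁄A]} {n : ℕ} (c b : Fin n → B)
    (hx : x = ∑ i, c i • D A B (b i)) :
    kahlerSeminorm A B vB x ≤ Finset.univ.sup fun i => vB (c i) * vB (b i) :=
  csInf_le (OrderBot.bddBelow _) ⟨n, c, b, hx, rfl⟩

theorem le_kahlerSeminorm_of_forall {x : Ω[B⁄A]} {r : ℝ≥0}
    (h : ∀ (n : ℕ) (c b : Fin n → B), x = ∑ i, c i • D A B (b i) →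
      r ≤ Finset.univ.sup fun i => vB (c i) * vB (b i)) :
    r ≤ kahlerSeminorm A B vB x := by
  obtain ⟨n, c, b, hx⟩ := exists_eq_sum_smul_D x
  exact le_csInf ⟨_, n, c, b, hx, rfl⟩ fun _ ⟨n, c, b, hx, hr⟩ => hr ▸ h n c b hx

theorem KaehlerDifferential.sum_append_smul_D {n m : ℕ} (c b : Fin n → B) (c' b' : Fin m → B) :
    ∑ i, Fin.append c c' i • D A B (Fin.append b b' i) =
      ∑ i, c i • D A B (b i) + ∑ i, c' i • D A B (b' i) := by
  simp [Fin.sum_univ_add]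

variable (A vB) in
def kahlerNullSubmodule (hmul : ∀ x y : B, vB (x * y) ≤ vB x * vB y) :
    Submodule B Ω[B⁄A] where
  carrier := {x | ∃ (n : ℕ) (c b : Fin n → B),
    x = ∑ i, c i • D A B (b i) ∧ ∀ i, vB (c i) * vB (b i) = 0}
  zero_mem' := ⟨0, Fin.elim0, Fin.elim0, by simp, Fin.rec0⟩
  add_mem' := by
    rintro x y ⟨n, c, b, rfl, hcb⟩ ⟨m, c', b', rfl, hcb'⟩
    refine ⟨n + m, Fin.append c c', Fin.append b b', (sum_append_smul_D ..).symm, ?_⟩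
    exact Fin.addCases (by simpa using hcb) (by simpa using hcb')
  smul_mem' := by
    rintro r x ⟨n, c, b, rfl, hcb⟩
    refine ⟨n, fun i => r * c i, b, by simp [Finset.smul_sum, mul_smul], fun i => ?_⟩
    refine nonpos_iff_eq_zero.mp ?_
    calc vB (r * c i) * vB (b i) ≤ vB r * (vB (c i) * vB (b i)) := by
          rw [← mul_assoc]; exact mul_le_mul_left (hmul _ _) _
      _ = 0 := by rw [hcb, mul_zero]

theorem smul_D_mem_kahlerNullSubmodule {hmul : ∀ x y : B, vB (x * y) ≤ vB x * vB y} {c b : B}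
    (h : vB c * vB b = 0) : c • D A B b ∈ kahlerNullSubmodule A vB hmul :=
  ⟨1, fun _ => c, fun _ => b, by simp, fun _ => h⟩

theorem kahlerSeminorm_add_le_of_mem_null {hmul : ∀ x y : B, vB (x * y) ≤ vB x * vB y}
    {y z : Ω[B⁄A]} (hz : z ∈ kahlerNullSubmodule A vB hmul) {n : ℕ} (c b : Fin n → B)
    (hy : y = ∑ i, c i • D A B (b i)) :
    kahlerSeminorm A B vB (y + z) ≤ Finset.univ.sup fun i => vB (c i) * vB (b i) := by
  obtain ⟨m, c', b', rfl, hcb'⟩ := hz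
  refine (kahlerSeminorm_le_of_eq_sum _ _ (hy ▸ sum_append_smul_D c b c' b').symm).trans ?_
  refine Finset.sup_le fun i _ => Fin.addCases (fun j => ?_) (fun j => ?_) i
  · simpa using Finset.le_sup (f := fun i => vB (c i) * vB (b i)) (Finset.mem_univ j)
  · simp [hcb']

end Representations

section Residue

variable {A B K L : Type*} [CommRing A] [CommRing B] [Algebra A B] [CommRing K] [CommRing L]
  [Algebra K L]

variable (A) in
/-- The kernel of `Ω[B⁄A] → Ω[(B ⧸ I)⁄A]`. -/
noncomputable def kahlerQuotientKer (I : Ideal B) : Submodule B Ω[B⁄A] :=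
  I • ⊤ ⊔ Submodule.span B (D A B '' I)

theorem D_mem_kahlerQuotientKer {I : Ideal B} {b : B} (h : b ∈ I) :
    D A B b ∈ kahlerQuotientKer A I :=
  Submodule.mem_sup_right (Submodule.subset_span ⟨b, h, rfl⟩)

theorem kahlerQuotientKer_le_kahlerNullSubmodule {vB : B → ℝ≥0}
    (hmul : ∀ x y : B, vB (x * y) ≤ vB x * vB y) {I : Ideal B} (hI : ∀ b ∈ I, vB b = 0) :
    kahlerQuotientKer A I ≤ kahlerNullSubmodule A vB hmul := by
  refine sup_le (Submodule.smul_le.mpr fun r hr ω _ => ?_) (Submodule.span_le.mpr ?_)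
  · obtain ⟨n, c, b, rfl⟩ := exists_eq_sum_smul_D ω
    simp only [Finset.smul_sum, smul_comm r]
    exact Submodule.sum_mem _ fun i _ => Submodule.smul_mem _ _ <|
      smul_D_mem_kahlerNullSubmodule (by rw [hI r hr, zero_mul])
  · rintro _ ⟨b, hb, rfl⟩
    simpa using smul_D_mem_kahlerNullSubmodule (A := A) (c := 1) (hmul := hmul)
      (by rw [hI b hb, mul_zero])

variable {M : Type*} [AddCommGroup M] [Module A M] [Module B M]

theorem Derivation.map_surjInv_eq {πB : B →+* L} (hπB : Function.Surjective πB)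
    (d : Derivation A B M) (hd : ∀ b, πB b = 0 → d b = 0) (b : B) :
    d (Function.surjInv hπB (πB b)) = d b := by
  rw [← sub_eq_zero, ← map_sub]
  exact hd _ (by rw [map_sub, Function.surjInv_eq hπB, sub_self])

variable [Module K M] [Module L M] [IsScalarTower K L M]

noncomputable def Derivation.descend (πA : A →+* K) (πB : B →+* L) (hπA : Function.Surjective πA)
    (hπB : Function.Surjective πB) (hcompat : ∀ a, algebraMap K L (πA a) = πB (algebraMap A B a))
    (hsmul : ∀ (c : B) (m : M), πB c • m = c • m) (d : Derivation A B M)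
    (hd : ∀ b, πB b = 0 → d b = 0) : Derivation K L M where
  toFun l := d (Function.surjInv hπB l)
  map_add' := hπB.forall₂.mpr fun b b' => by
    simp only [← map_add, d.map_surjInv_eq hπB hd]
  map_smul' := hπA.forall.mpr fun a => hπB.forall.mpr fun b => by
    have h : πA a • πB b = πB (algebraMap A B a * b) := by
      rw [Algebra.smul_def, hcompat, map_mul]
    simp only [h, d.map_surjInv_eq hπB hd, Derivation.leibniz, Derivation.map_algebraMap,
      smul_zero, add_zero, RingHom.id_apply, ← algebraMap_smul L (πA a), hcompat, hsmul]
  map_one_eq_zero' := by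
    simp only [LinearMap.coe_mk, AddHom.coe_mk]
    rw [← map_one πB, d.map_surjInv_eq hπB hd, d.map_one_eq_zero]
  leibniz' := hπB.forall₂.mpr fun b b' => by
    simp only [LinearMap.coe_mk, AddHom.coe_mk, ← map_mul, d.map_surjInv_eq hπB hd,
      Derivation.leibniz, hsmul]

theorem Derivation.descend_apply {πA : A →+* K} {πB : B →+* L} {hπA : Function.Surjective πA}
    {hπB : Function.Surjective πB} {hcompat : ∀ a, algebraMap K L (πA a) = πB (algebraMap A B a)}
    {hsmul : ∀ (c : B) (m : M), πB c • m = c • m} {d : Derivation A B M}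
    {hd : ∀ b, πB b = 0 → d b = 0} (b : B) :
    Derivation.descend πA πB hπA hπB hcompat hsmul d hd (πB b) = d b :=
  d.map_surjInv_eq hπB hd b

end Residue

theorem ker_le_kahlerQuotientKer {A B K L : Type*} [CommRing A] [CommRing B] [Algebra A B]
    [CommRing K] [CommRing L] [Algebra K L] {πA : A →+* K} {πB : B →+* L}
    (hπA : Function.Surjective πA) (hπB : Function.Surjective πB)
    (hcompat : ∀ a, algebraMap K L (πA a) = πB (algebraMap A B a))
    {Φ : Ω[B⁄A] →+ Ω[L⁄K]} (hΦ : ∀ c b : B, Φ (c • D A B b) = πB c • D K L (πB b))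
    {x : Ω[B⁄A]} (hx : Φ x = 0) : x ∈ kahlerQuotientKer A (RingHom.ker πB) := by
  set N := kahlerQuotientKer A (RingHom.ker πB)
  -- `ker πB` acts trivially on `Ω[B⁄A] ⧸ N`, so the `B`-action descends to `L`.
  let _ : SMul L (Ω[B⁄A] ⧸ N) := ⟨fun l q => Function.surjInv hπB l • q⟩
  have hsmul (c : B) (q : Ω[B⁄A] ⧸ N) : πB c • q = c • q :=
    Submodule.Quotient.smul_eq_smul_of_sub_mem le_sup_left
      (by simp [RingHom.mem_ker, Function.surjInv_eq hπB]) q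
  let _ := hπB.moduleLeft πB hsmul
  let _ : Module K (Ω[B⁄A] ⧸ N) := Module.compHom _ (algebraMap K L)
  have _ : IsScalarTower K L (Ω[B⁄A] ⧸ N) := ⟨fun k l q => by
    rw [Algebra.smul_def]; exact mul_smul (algebraMap K L k) l q⟩
  let dbar := Derivation.descend πA πB hπA hπB hcompat hsmul (N.mkQ.compDer (D A B))
    fun b hb => (Submodule.Quotient.mk_eq_zero N).mpr (D_mem_kahlerQuotientKer hb)
  have hdbar (b : B) : dbar (πB b) = N.mkQ (D A B b) := Derivation.descend_apply b
  have hsection (y : Ω[B⁄A]) : dbar.liftKaehlerDifferential (Φ y) = N.mkQ y := by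
    obtain ⟨n, c, b, rfl⟩ := exists_eq_sum_smul_D y
    simp only [map_sum, hΦ, map_smul, Derivation.liftKaehlerDifferential_comp_D, hdbar, hsmul]
  simpa [hx] using (hsection x).symm

theorem kahlerSeminorm_isometry_to_residue_fields_general
    {A B K L : Type*} [CommRing A] [CommRing B] [IsLocalRing B]
    [Algebra A B] [Field K] [Field L] [Algebra K L]
    (vB : B → ℝ≥0)
    (hB : IsRingSeminorm vB)
    (πA : A →+* K) (πB : B →+* L)
    (hπAsurj : Function.Surjective πA)
    (hπBsurj : Function.Surjective πB) (hπBker : RingHom.ker πB = IsLocalRing.maximalIdeal B)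
    (hcompat : ∀ a : A, algebraMap K L (πA a) = πB (algebraMap A B a))
    (hmB : ∀ b ∈ IsLocalRing.maximalIdeal B, vB b = 0)
    (Φ : Ω[B⁄A] →+ Ω[L⁄K])
    (hΦ : ∀ c b : B,
      Φ (c • KaehlerDifferential.D A B b) = πB c • KaehlerDifferential.D K L (πB b)) :
    ∀ x : Ω[B⁄A],
      kahlerSeminorm K L (quotientSeminorm πB vB) (Φ x) = kahlerSeminorm A B vB x := by
  intro x
  have hker : ∀ b ∈ RingHom.ker πB, vB b = 0 := hπBker ▸ hmB
  have hvL : ∀ b, quotientSeminorm πB vB (πB b) = vB b :=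
    quotientSeminorm_apply_of_eq_on_fibers fun b b' h =>
      hB.1.map_eq_of_map_sub_eq_zero (hker _ (by simp [RingHom.mem_ker, h]))
  apply le_antisymm
  · refine le_kahlerSeminorm_of_forall fun n c b hx => ?_
    refine (kahlerSeminorm_le_of_eq_sum (fun i => πB (c i)) (fun i => πB (b i)) ?_).trans_eq ?_
    · simp [hx, map_sum, hΦ]
    · simp [hvL]
  · refine le_kahlerSeminorm_of_forall fun n γ β hΦx => ?_
    obtain ⟨c, rfl⟩ := hπBsurj.comp_left γ
    obtain ⟨b, rfl⟩ := hπBsurj.comp_left β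
    set y := ∑ i, c i • D A B (b i)
    have hxy : x - y ∈ kahlerNullSubmodule A vB hB.2.2 :=
      kahlerQuotientKer_le_kahlerNullSubmodule hB.2.2 hker <|
        ker_le_kahlerQuotientKer hπAsurj hπBsurj hcompat hΦ (by simp [y, hΦx, map_sum, hΦ])
    calc kahlerSeminorm A B vB x = kahlerSeminorm A B vB (y + (x - y)) := by
          rw [add_sub_cancel]
      _ ≤ Finset.univ.sup fun i => vB (c i) * vB (b i) :=
          kahlerSeminorm_add_le_of_mem_null hxy c b rfl
      _ = _ := by simp [hvL]

/-- Let `A → B` be a local non-expansive homomorphism of seminormed local rings, and let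
`K = A/m_A`, `L = B/m_B` be the residue fields (presented by surjections `πA`, `πB` with kernels
the maximal ideals), equipped with the quotient seminorms. If every element of `m_B` has
seminorm `0`, then the natural map `Ω_{B/A} → Ω_{L/K}` (characterized by
`c • d b ↦ πB c • d (πB b)`) is an isometry for the Kähler seminorms. -/
theorem kahlerSeminorm_isometry_to_residue_fields
    {A B K L : Type*} [CommRing A] [CommRing B] [IsLocalRing A] [IsLocalRing B]
    [Algebra A B] [Field K] [Field L] [Algebra K L]
    (vA : A → ℝ≥0) (vB : B → ℝ≥0)
    (hA : IsRingSeminorm vA) (hB : IsRingSeminorm vB)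
    (hnonexp : ∀ a : A, vB (algebraMap A B a) ≤ vA a)
    (hlocal : ∀ a ∈ IsLocalRing.maximalIdeal A, algebraMap A B a ∈ IsLocalRing.maximalIdeal B)
    (πA : A →+* K) (πB : B →+* L)
    (hπAsurj : Function.Surjective πA) (hπAker : RingHom.ker πA = IsLocalRing.maximalIdeal A)
    (hπBsurj : Function.Surjective πB) (hπBker : RingHom.ker πB = IsLocalRing.maximalIdeal B)
    (hcompat : ∀ a : A, algebraMap K L (πA a) = πB (algebraMap A B a))
    (hmB : ∀ b ∈ IsLocalRing.maximalIdeal B, vB b = 0)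
    (Φ : Ω[B⁄A] →+ Ω[L⁄K])
    (hΦ : ∀ c b : B,
      Φ (c • KaehlerDifferential.D A B b) = πB c • KaehlerDifferential.D K L (πB b)) :
    ∀ x : Ω[B⁄A],
      kahlerSeminorm K L (quotientSeminorm πB vB) (Φ x) = kahlerSeminorm A B vB x :=
  kahlerSeminorm_isometry_to_residue_fields_general vB hB πA πB hπAsurj hπBsurj hπBker hcompat hmB Φ
    hΦ
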